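/- arXiv:1303.4782 — 2 statements merged into one kernel-verified Lean document; each statement's English description precedes it below -/
import Mathlib

section
/- Let d > 0, P > 0, α ∈ [0,1], ᾱ = 1 − α, R₁ > 0, k ≥ 1, a ≥ 0, b = 1 + a/d, and suppose 2^{2R₁/k}·ᾱ < 1. Define ŝ = max{ [(2^{2R₁/k} − 1)b + (2^{2R₁/k}ᾱ − 1)Pa]⁺ / (b(1 − 2^{2R₁/k}ᾱ)P), s_min }. Then for every s ≥ ŝ, k·f_I(αP, ᾱP, a, s, d) ≥ R₁; i.e., successful decoding of layer 1 in k slots is implied by S ≥ ŝ when ŝ exceeds s_min. -/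
noncomputable def fI (P Pbar a s d : ℝ) : ℝ :=
  (1 / 2) * Real.logb 2
    (1 + P * (s + a * (1 + s / d)) / (1 + a / d + Pbar * (s + a * (1 + s / d))))

/-- For every side-information state `s` at least the inferred level `ŝ`,
layer 1 is decodable within `k` slots: `k·f_I ≥ R₁`. -/
theorem layer1_decodable_above_shat
    (d P α R₁ a smin : ℝ) (k : ℕ) (hk : 1 ≤ k)
    (hd : 0 < d) (hP : 0 < P) (hα : α ∈ Set.Icc (0 : ℝ) 1) (hR₁ : 0 < R₁)
    (ha : 0 ≤ a) (hsmin : 0 ≤ smin)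
    (b : ℝ) (hb : b = 1 + a / d)
    (hcond : (2 : ℝ) ^ (2 * R₁ / k) * (1 - α) < 1)
    (shat : ℝ)
    (hshat : shat =
      max (max (((2 : ℝ) ^ (2 * R₁ / k) - 1) * b +
            ((2 : ℝ) ^ (2 * R₁ / k) * (1 - α) - 1) * P * a) 0 /
          (b * (1 - (2 : ℝ) ^ (2 * R₁ / k) * (1 - α)) * P)) smin) :
    ∀ s : ℝ, shat ≤ s → R₁ ≤ (k : ℝ) * fI (α * P) ((1 - α) * P) a s d := by
  intro s hs
  obtain ⟨hα0, hα1⟩ := hα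
  have hk0 : (0:ℝ) < k := by exact_mod_cast Nat.lt_of_lt_of_le Nat.zero_lt_one hk
  set E : ℝ := (2:ℝ) ^ (2 * R₁ / k) with hE
  have hexp : 0 < 2 * R₁ / k := by positivity
  have hE1 : 1 < E := Real.one_lt_rpow_iff_of_pos (by norm_num) |>.2 (Or.inl ⟨by norm_num, hexp⟩)
  have hb0 : 0 < b := by rw [hb]; positivity
  have hs0 : 0 ≤ s := le_trans hsmin (le_trans (hshat ▸ le_max_right _ _) hs)
  set T : ℝ := s + a * (1 + s / d) with hT
  have hT0 : 0 ≤ T := by positivity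
  have hTb : T = s * b + a := by rw [hT, hb]; field_simp; ring
  clear_value E T
  have hEα : 0 < 1 - E * (1 - α) := by linarith
  have hc : 0 < b * (1 - E * (1 - α)) * P := by positivity
  have hsN : max (((E - 1) * b + (E * (1 - α) - 1) * P * a)) 0 /
      (b * (1 - E * (1 - α)) * P) ≤ s :=
    le_trans (hshat ▸ le_max_left _ _) hs
  have hN : (E - 1) * b + (E * (1 - α) - 1) * P * a ≤ s * (b * (1 - E * (1 - α)) * P) := by
    have h1 := (div_le_iff₀ hc).1 hsN
    have h2 := le_max_left ((E - 1) * b + (E * (1 - α) - 1) * P * a) (0:ℝ)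
    linarith
  have hkey : E * (b + (1 - α) * P * T) ≤ b + P * T := by nlinarith [hTb]
  have hD : 0 < 1 + a / d + (1 - α) * P * T := by
    have h1 : 0 ≤ (1 - α) * P * T := by
      apply mul_nonneg (mul_nonneg (by linarith) hP.le) hT0
    have h2 : 0 ≤ a / d := by positivity
    nlinarith [h1, h2]
  have hbD : b + (1 - α) * P * T = 1 + a / d + (1 - α) * P * T := by rw [hb]
  have hratio : E ≤ 1 + (α * P) * T / (1 + a / d + ((1 - α) * P) * T) := by
    have hnum : (E - 1) * (1 + a / d + (1 - α) * P * T) ≤ (α * P) * T := by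
      rw [← hbD]; nlinarith
    have h3 : E - 1 ≤ (α * P) * T / (1 + a / d + ((1 - α) * P) * T) := by
      rw [le_div_iff₀ hD]; linarith [hnum]
    linarith
  have hX0 : 0 < 1 + (α * P) * T / (1 + a / d + ((1 - α) * P) * T) :=
    lt_of_lt_of_le (lt_trans zero_lt_one hE1) hratio
  have hlog : 2 * R₁ / k ≤ Real.logb 2
      (1 + (α * P) * T / (1 + a / d + ((1 - α) * P) * T)) := by
    have h4 : Real.logb 2 E = 2 * R₁ / k := by
      rw [hE]; exact Real.logb_rpow (by norm_num) (by norm_num)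
    calc 2 * R₁ / k = Real.logb 2 E := h4.symm
      _ ≤ _ := Real.logb_le_logb_of_le (by norm_num) (lt_trans zero_lt_one hE1) hratio
  have heq : R₁ = (k : ℝ) * (1 / 2 * (2 * R₁ / k)) := by
    field_simp
  rw [fI, ← hT, heq]
  gcongr
end

section
/- Let d₁, d₂ > 0, s₁ ≥ 0, P > 0, α ∈ [0,1], ᾱ = 1 − α, a₁, a₂ ≥ 0, b₂ = 1 + a₂/d₂, and R₁ > 0. Define h = R₁ − f_I(αP, ᾱP, a₁, s₁, d₁) and suppose h > 0 and 2^{2h}·ᾱ < 1. Then the event f_I(αP, ᾱP, a₁, s₁, d₁) + f_I(αP, ᾱP, a₂, s₂, d₂) < R₁ is equivalent to s₂ < [(2^{2h} − 1)b₂ + (2^{2h}ᾱ − 1)a₂P]⁺ / ((1 − 2^{2h}ᾱ)b₂P). -/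
/-- Two-slot STSC layer-1 outage condition (Lemma 6): given the residual rate
`h = R₁ − f_I(slot 1) > 0` with `2^{2h} ᾱ < 1`, outage after two slots is a
threshold condition on the second-slot state `s₂`. -/
theorem stsc_two_slot_layer1_outage
    (d₁ d₂ s₁ P α R₁ a₁ a₂ : ℝ)
    (hd₁ : 0 < d₁) (hd₂ : 0 < d₂) (hs₁ : 0 ≤ s₁) (hP : 0 < P)
    (hα : α ∈ Set.Icc (0 : ℝ) 1) (hR₁ : 0 < R₁) (ha₁ : 0 ≤ a₁) (ha₂ : 0 ≤ a₂)
    (b₂ : ℝ) (hb₂ : b₂ = 1 + a₂ / d₂)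
    (h : ℝ) (hh : h = R₁ - fI (α * P) ((1 - α) * P) a₁ s₁ d₁)
    (hhpos : 0 < h) (hcond : (2 : ℝ) ^ (2 * h) * (1 - α) < 1) :
    ∀ s₂ : ℝ, 0 ≤ s₂ →
      (fI (α * P) ((1 - α) * P) a₁ s₁ d₁ + fI (α * P) ((1 - α) * P) a₂ s₂ d₂ < R₁ ↔
        s₂ < max (((2 : ℝ) ^ (2 * h) - 1) * b₂ +
              ((2 : ℝ) ^ (2 * h) * (1 - α) - 1) * a₂ * P) 0 /
            ((1 - (2 : ℝ) ^ (2 * h) * (1 - α)) * b₂ * P)) := by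
  intro s₂ hs₂
  obtain ⟨hα0, hα1⟩ := hα
  set T : ℝ := (2 : ℝ) ^ (2 * h) with hT
  set N : ℝ := (T - 1) * b₂ + (T * (1 - α) - 1) * a₂ * P with hN
  have hᾱ : 0 ≤ 1 - α := by linarith
  have hb₂pos : 0 < b₂ := by rw [hb₂]; positivity
  have hX : 0 ≤ s₂ + a₂ * (1 + s₂ / d₂) := by positivity
  have hXeq : s₂ + a₂ * (1 + s₂ / d₂) = s₂ * b₂ + a₂ := by
    rw [hb₂]; field_simp; ring
  have hXb : 0 ≤ s₂ * b₂ + a₂ := hXeq ▸ hX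
  have hαPX : 0 ≤ α * P * (s₂ * b₂ + a₂) := by positivity
  have hD₀ : 0 < b₂ + (1 - α) * P * (s₂ * b₂ + a₂) := by
    have : 0 ≤ (1 - α) * P * (s₂ * b₂ + a₂) :=
      mul_nonneg (mul_nonneg hᾱ hP.le) hXb
    linarith
  have hT1 : 1 < T := by
    rw [hT]
    rw [Real.one_lt_rpow_iff_of_pos (by norm_num : (0:ℝ) < 2)]
    left; constructor <;> [norm_num; linarith]
  have hcoef : 0 < 1 - T * (1 - α) := by linarith
  have hD' : 0 < (1 - T * (1 - α)) * b₂ * P := by positivity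
  -- unfold fI for slot 2
  have hQpos : 0 < 1 + α * P * (s₂ * b₂ + a₂) / (b₂ + (1 - α) * P * (s₂ * b₂ + a₂)) := by
    have := div_nonneg hαPX hD₀.le
    linarith
  have hfI2 : fI (α * P) ((1 - α) * P) a₂ s₂ d₂ =
      (1 / 2) * Real.logb 2
        (1 + α * P * (s₂ * b₂ + a₂) / (b₂ + (1 - α) * P * (s₂ * b₂ + a₂))) := by
    unfold fI
    rw [hXeq, ← hb₂]
  constructor
  · intro hout
    have h2 : fI (α * P) ((1 - α) * P) a₂ s₂ d₂ < h := by rw [hh]; linarith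
    rw [hfI2] at h2
    have hlog : Real.logb 2
        (1 + α * P * (s₂ * b₂ + a₂) / (b₂ + (1 - α) * P * (s₂ * b₂ + a₂))) < 2 * h := by
      linarith
    rw [Real.logb_lt_iff_lt_rpow (by norm_num) hQpos] at hlog
    rw [← hT] at hlog
    -- clear denominator
    have h3 : α * P * (s₂ * b₂ + a₂) < (T - 1) * (b₂ + (1 - α) * P * (s₂ * b₂ + a₂)) := by
      have := (div_lt_iff₀ hD₀).mp (by linarith : α * P * (s₂ * b₂ + a₂) /
        (b₂ + (1 - α) * P * (s₂ * b₂ + a₂)) < T - 1)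
      linarith
    have h4 : s₂ * ((1 - T * (1 - α)) * b₂ * P) < N := by rw [hN]; nlinarith [h3]
    rw [lt_div_iff₀ hD']
    rw [lt_max_iff]
    exact Or.inl h4
  · intro hlt
    rw [lt_div_iff₀ hD', lt_max_iff] at hlt
    have h4 : s₂ * ((1 - T * (1 - α)) * b₂ * P) < N := by
      rcases hlt with h4 | h4
      · exact h4
      · exact absurd h4 (not_lt.mpr (by positivity))
    have h3 : α * P * (s₂ * b₂ + a₂) < (T - 1) * (b₂ + (1 - α) * P * (s₂ * b₂ + a₂)) := by
      rw [hN] at h4; nlinarith [h4]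
    have hfrac : α * P * (s₂ * b₂ + a₂) / (b₂ + (1 - α) * P * (s₂ * b₂ + a₂)) < T - 1 :=
      (div_lt_iff₀ hD₀).mpr (by linarith)
    have hlog : Real.logb 2
        (1 + α * P * (s₂ * b₂ + a₂) / (b₂ + (1 - α) * P * (s₂ * b₂ + a₂))) < 2 * h := by
      rw [Real.logb_lt_iff_lt_rpow (by norm_num) hQpos, ← hT]
      linarith
    have h2 : fI (α * P) ((1 - α) * P) a₂ s₂ d₂ < h := by rw [hfI2]; linarith
    rw [hh] at h2; linarith
end
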